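/- Let S = S₁ ⊕ … ⊕ S_k be a schedule in increasing irreducible structure for (N, ⊴, c) with corresponding irreducible intervals I₁,…,I_k, and let B ∈ ℝ≥0 ∪ {∞}. Then there exists l ∈ {0,…,k} such that I₁ ∪ … ∪ I_l attains the minimum of c(I) over all ideals I of ⊴ with b(I) ≤ B. -/

import Mathlib

open List

variable {ι : Type*} [DecidableEq ι]

/-- Total cost of a schedule (list of jobs). -/
def listCost (c : ι → ℝ) (S : List ι) : ℝ := (S.map c).sum

/-- Budget of a schedule: maximum cost of a prefix (the empty prefix has cost 0). -/
def listBudget (c : ι → ℝ) : List ι → ℝ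
  | [] => 0
  | j :: t => max 0 (c j + listBudget c t)

/-- Return of a schedule. -/
def listReturn (c : ι → ℝ) (S : List ι) : ℝ := listCost c S - listBudget c S

/-- `S` enumerates the finite job set `N` without repetition. -/
def IsScheduleOf (N : Finset ι) (S : List ι) : Prop :=
  S.Nodup ∧ ∀ j, j ∈ S ↔ j ∈ N

/-- `S` is a linear extension of the precedence relation `r` (restricted to its jobs). -/
def RespectsOrder (r : ι → ι → Prop) (S : List ι) : Prop :=
  ∀ i j, r i j → i ∈ S → j ∈ S → S.idxOf i ≤ S.idxOf j

/-- Minimum budget over all feasible schedules of the job set `X`. -/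
noncomputable def setBudget (r : ι → ι → Prop) (c : ι → ℝ) (X : Finset ι) : ℝ :=
  sInf {b | ∃ S : List ι, IsScheduleOf X S ∧ RespectsOrder r S ∧ listBudget c S = b}

/-- Total cost of a job set. -/
def setCost (c : ι → ℝ) (X : Finset ι) : ℝ := ∑ j ∈ X, c j

/-- Return of a job set. -/
noncomputable def setReturn (r : ι → ι → Prop) (c : ι → ℝ) (X : Finset ι) : ℝ :=
  setCost c X - setBudget r c X

/-- The cbr-preorder on job sets. -/
def cbrLE (r : ι → ι → Prop) (c : ι → ℝ) (X Y : Finset ι) : Prop :=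
  (setCost c X < 0 ∧ 0 ≤ setCost c Y) ∨
  (setCost c X < 0 ∧ setCost c Y < 0 ∧ setBudget r c X < setBudget r c Y) ∨
  (setCost c X < 0 ∧ setCost c Y < 0 ∧ setBudget r c X = setBudget r c Y ∧
    setReturn r c X ≤ setReturn r c Y) ∨
  (0 ≤ setCost c X ∧ 0 ≤ setCost c Y ∧ setReturn r c X ≤ setReturn r c Y)

/-- `J` is an ideal (downward-closed subset) of `r` restricted to `I`. -/
def IsIdealIn (r : ι → ι → Prop) (I J : Finset ι) : Prop :=
  J ⊆ I ∧ ∀ j ∈ J, ∀ i ∈ I, r i j → i ∈ J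

/-- `F` is a filter (upward-closed subset) of `r` restricted to `I`. -/
def IsFilterIn (r : ι → ι → Prop) (I F : Finset ι) : Prop :=
  F ⊆ I ∧ ∀ i ∈ F, ∀ j ∈ I, r i j → j ∈ F

/-- `I` is an interval of `r` on `N`: intersection of an ideal and a filter. -/
def IsIntervalIn (r : ι → ι → Prop) (N I : Finset ι) : Prop :=
  ∃ J F, IsIdealIn r N J ∧ IsFilterIn r N F ∧ I = J ∩ F

/-- An irreducible interval: every ideal of the restricted order is `⪰` the interval. -/
def IsIrreducibleIn (r : ι → ι → Prop) (c : ι → ℝ) (N I : Finset ι) : Prop :=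
  IsIntervalIn r N I ∧ ∀ J, IsIdealIn r I J → cbrLE r c I J

/-- A schedule (given as blocks `SS`) in increasing irreducible structure. -/
def IncIrrStructure (r : ι → ι → Prop) (c : ι → ℝ) (N : Finset ι)
    (SS : List (List ι)) : Prop :=
  IsScheduleOf N SS.flatten ∧ RespectsOrder r SS.flatten ∧
  (∀ S ∈ SS, IsIrreducibleIn r c N S.toFinset ∧ RespectsOrder r S ∧
    listBudget c S = setBudget r c S.toFinset) ∧
  ∀ i j : Fin SS.length, i < j → cbrLE r c (SS.get i).toFinset (SS.get j).toFinset

/-!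
Every ideal `I` is dominated, in budget and in cost at once, by a prefix union
`I₁ ∪ ⋯ ∪ I_l`, so the cheapest prefix union within budget `B` is optimal. Domination goes by
induction on the blocks. If `c(I) < 0`, then `c(I₁) < 0` and `b(I₁) ≤ b(I)`: cut a schedule of
`I` at the first prefix whose part in `I₁` or whose part outside `I₁` is negative; that part
needs budget at least `b(I₁)` (by irreducibility of `I₁`, resp. by induction and `I₁ ⪯ I₂`).
Irreducibility also gives `c(J) ≥ c(I₁)` for every ideal `J` of `I₁`, hence
`c(I₁) + b(I \ I₁) ≤ b(I)`, so `I₁` followed by the prefix union dominating `I \ I₁`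
dominates `I`.
-/

section ListBudget

variable {α : Type*} {c : α → ℝ}

lemma listCost_append (S T : List α) : listCost c (S ++ T) = listCost c S + listCost c T := by
  simp [listCost]

lemma listCost_filter_add_listCost_filter_not (p : α → Bool) (S : List α) :
    listCost c (S.filter p) + listCost c (S.filter fun x => !p x) = listCost c S := by
  rw [← listCost_append]
  exact ((filter_append_perm p S).map c).sum_eq

lemma listBudget_nonneg (S : List α) : 0 ≤ listBudget c S := by
  cases S with
  | nil => exact le_rfl
  | cons a S => exact le_max_left _ _

lemma listBudget_append (S T : List α) :
    listBudget c (S ++ T) = max (listBudget c S) (listCost c S + listBudget c T) := by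
  induction S with
  | nil => simp [listBudget, listCost, listBudget_nonneg]
  | cons a S ih =>
    simp only [cons_append, listBudget, ih, listCost, map_cons, sum_cons]
    rw [max_assoc, ← max_add_add_left, add_assoc]

lemma listCost_le_listBudget_of_prefix {P S : List α} (h : P <+: S) :
    listCost c P ≤ listBudget c S := by
  obtain ⟨T, rfl⟩ := h
  rw [listBudget_append]
  exact le_max_of_le_right (le_add_of_nonneg_right (listBudget_nonneg T))

lemma exists_prefix_listCost_eq_listBudget (S : List α) :
    ∃ P, P <+: S ∧ listCost c P = listBudget c S := by
  induction S with
  | nil => exact ⟨[], prefix_rfl, rfl⟩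
  | cons a S ih =>
    obtain ⟨P, hP, hcost⟩ := ih
    rcases le_total (c a + listBudget c S) 0 with h | h
    · exact ⟨[], nil_prefix, by simp [listCost, listBudget, h]⟩
    · exact ⟨a :: P, (prefix_cons_inj a).2 hP, by simp_all [listCost, listBudget]⟩

lemma exists_prefix_listCost_filter_eq_listBudget (p : α → Bool) (S : List α) :
    ∃ P, P <+: S ∧ listCost c (P.filter p) = listBudget c (S.filter p) := by
  obtain ⟨Q, hQ, hcost⟩ := exists_prefix_listCost_eq_listBudget (c := c) (S.filter p)
  obtain ⟨P, hP, rfl⟩ := prefix_filter_iff.1 hQ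
  exact ⟨P, hP, hcost⟩

lemma exists_minimal_prefix (q : List α → Prop) {S : List α} (hS : q S) :
    ∃ U, U <+: S ∧ q U ∧ ∀ V, V <+: U → V ≠ U → ¬ q V := by
  obtain ⟨U, ⟨hUS, hU⟩, hmin⟩ :=
    (measure List.length).wf.has_min {U | U <+: S ∧ q U} ⟨S, prefix_rfl, hS⟩
  refine ⟨U, hUS, hU, fun V hVU hne hV => hmin V ⟨hVU.trans hUS, hV⟩ ?_⟩
  exact lt_of_le_of_ne hVU.length_le (mt hVU.eq_of_length hne)

/-- The `p`-part of `U` is negative, so it reaches its nonnegative budget at a proper prefix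
of `U`. -/
lemma le_listBudget_of_neg_filter_prefix {U T : List α} (hUT : U <+: T) (p : α → Bool) {b : ℝ}
    (hneg : listCost c (U.filter p) < 0) (hb : b ≤ listBudget c (U.filter p))
    (hrest : ∀ V, V <+: U → V ≠ U → 0 ≤ listCost c (V.filter fun x => !p x)) :
    b ≤ listBudget c T := by
  obtain ⟨V, hVU, hV⟩ := exists_prefix_listCost_filter_eq_listBudget (c := c) p U
  have hne : V ≠ U := by
    rintro rfl
    linarith [listBudget_nonneg (c := c) (V.filter p)]
  calc b ≤ listCost c (V.filter p) + listCost c (V.filter fun x => !p x) := by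
        linarith [hrest V hVU hne]
    _ = listCost c V := listCost_filter_add_listCost_filter_not p V
    _ ≤ listBudget c T := listCost_le_listBudget_of_prefix (hVU.trans hUT)

lemma flatten_take_prefix (SS : List (List α)) (l : ℕ) :
    (SS.take l).flatten <+: SS.flatten :=
  ⟨(SS.drop l).flatten, by rw [← flatten_append, take_append_drop]⟩

end ListBudget

/-- `RespectsOrder` in a form inherited by sublists; the two agree on duplicate-free lists. -/
def IsLinExt {α : Type*} (r : α → α → Prop) (S : List α) : Prop :=
  S.Pairwise fun a b => r b a → a = b

section Ideals

variable {α : Type*} {r : α → α → Prop}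

lemma IsLinExt.sublist {S T : List α} (hT : IsLinExt r T) (h : S <+ T) : IsLinExt r S :=
  Pairwise.sublist h hT

lemma IsIdealIn.trans {N X J : Finset α} (hX : IsIdealIn r N X) (hJ : IsIdealIn r X J) :
    IsIdealIn r N J :=
  ⟨hJ.1.trans hX.1, fun j hj i hi hij => hJ.2 j hj i (hX.2 j (hJ.1 hj) i hi hij) hij⟩

lemma IsIdealIn.inter [DecidableEq α] {N I A : Finset α} (hI : IsIdealIn r N I) (hA : A ⊆ N) :
    IsIdealIn r A (I ∩ A) :=
  ⟨Finset.inter_subset_right, fun j hj i hi hij =>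
    Finset.mem_inter.2 ⟨hI.2 j (Finset.mem_inter.1 hj).1 i (hA hi) hij, hi⟩⟩

lemma IsIdealIn.union [DecidableEq α] {N I J : Finset α} (hI : IsIdealIn r N I)
    (hJ : IsIdealIn r N J) : IsIdealIn r N (I ∪ J) := by
  refine ⟨Finset.union_subset hI.1 hJ.1, fun j hj i hi hij => ?_⟩
  rcases Finset.mem_union.1 hj with hj | hj
  · exact Finset.mem_union_left _ (hI.2 j hj i hi hij)
  · exact Finset.mem_union_right _ (hJ.2 j hj i hi hij)

lemma isIdealIn_of_prefix [DecidableEq α] {P S : List α} (hS : IsLinExt r S) (hP : P <+: S) :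
    IsIdealIn r S.toFinset P.toFinset := by
  obtain ⟨Q, rfl⟩ := hP
  refine ⟨fun a ha => by simp_all, fun j hj i hi hij => ?_⟩
  simp only [mem_toFinset, mem_append] at hj hi ⊢
  rcases hi with hi | hi
  · exact hi
  · exact (pairwise_append.1 hS).2.2 j hj i hi hij ▸ hj

lemma subset_flatten_cons_left [DecidableEq α] {A : List α}
    {SS : List (List α)} : A.toFinset ⊆ (A :: SS).flatten.toFinset := by
  intro a; simp_all

lemma subset_flatten_cons_right [DecidableEq α] {A : List α}
    {SS : List (List α)} : SS.flatten.toFinset ⊆ (A :: SS).flatten.toFinset := by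
  intro a; simp_all

end Ideals

section SetBudget

variable {r : ι → ι → Prop} {c : ι → ℝ}

lemma isScheduleOf_iff {X : Finset ι} {S : List ι} :
    IsScheduleOf X S ↔ S.Nodup ∧ S.toFinset = X := by
  simp [IsScheduleOf, Finset.ext_iff]

lemma respectsOrder_of_isLinExt {S : List ι} (h : IsLinExt r S) : RespectsOrder r S := by
  intro i j hij hi hj
  by_contra! hlt
  have hji := pairwise_iff_get.1 h ⟨S.idxOf j, idxOf_lt_length_iff.2 hj⟩
    ⟨S.idxOf i, idxOf_lt_length_iff.2 hi⟩ hlt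
  simp only [idxOf_get] at hji
  exact (hji hij ▸ hlt).false

lemma isLinExt_of_respectsOrder {S : List ι} (hS : S.Nodup) (h : RespectsOrder r S) :
    IsLinExt r S := by
  refine pairwise_iff_get.2 fun i j hij hji => ?_
  have hidx := h _ _ hji (S.get_mem j) (S.get_mem i)
  rw [get_idxOf hS, get_idxOf hS] at hidx
  exact absurd hidx (not_le.2 hij)

lemma listCost_eq_setCost {S : List ι} (hS : S.Nodup) : listCost c S = setCost c S.toFinset :=
  (sum_toFinset c hS).symm

lemma toFinset_filter_mem (S : List ι) (A : Finset ι) :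
    (S.filter (· ∈ A)).toFinset = S.toFinset ∩ A := by
  ext; simp

lemma toFinset_filter_not_mem (S : List ι) (A : Finset ι) :
    (S.filter fun x => !decide (x ∈ A)).toFinset = S.toFinset \ A := by
  ext; simp

lemma setBudget_le_listBudget {S : List ι} (hS : S.Nodup) (hSr : IsLinExt r S) :
    setBudget r c S.toFinset ≤ listBudget c S :=
  csInf_le ⟨0, by rintro _ ⟨T, -, -, rfl⟩; exact listBudget_nonneg T⟩
    ⟨S, isScheduleOf_iff.2 ⟨hS, rfl⟩, respectsOrder_of_isLinExt hSr, rfl⟩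

lemma setBudget_nonneg (X : Finset ι) : 0 ≤ setBudget r c X :=
  Real.sInf_nonneg (by rintro _ ⟨T, -, -, rfl⟩; exact listBudget_nonneg T)

lemma setBudget_empty : setBudget r c ∅ = 0 :=
  le_antisymm (setBudget_le_listBudget (S := []) nodup_nil Pairwise.nil) (setBudget_nonneg ∅)

/-- There are finitely many schedules of `X`, and restricting `L` gives one. -/
lemma exists_optimal_schedule {L : List ι} (hL : L.Nodup) (hLr : IsLinExt r L) {X : Finset ι}
    (hX : X ⊆ L.toFinset) :
    ∃ S : List ι, S.Nodup ∧ IsLinExt r S ∧ S.toFinset = X ∧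
      listBudget c S = setBudget r c X := by
  set budgets :=
    {b | ∃ S : List ι, IsScheduleOf X S ∧ RespectsOrder r S ∧ listBudget c S = b}
  have hrestrict : (L.filter (· ∈ X)).toFinset = X := by
    rw [toFinset_filter_mem, Finset.inter_eq_right.2 hX]
  have hne : budgets.Nonempty :=
    ⟨_, _, isScheduleOf_iff.2 ⟨hL.filter _, hrestrict⟩,
      respectsOrder_of_isLinExt (hLr.sublist filter_sublist), rfl⟩
  have hfin : budgets.Finite := by
    refine ((X.toList.permutations.finite_toSet).image (listBudget c)).subset ?_
    rintro _ ⟨S, hS, -, rfl⟩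
    rw [isScheduleOf_iff] at hS
    exact ⟨S, mem_permutations.2
      (perm_of_nodup_nodup_toFinset_eq hS.1 X.nodup_toList (by simp [hS.2])), rfl⟩
  obtain ⟨S, hS, hSr, hSb⟩ := hne.csInf_mem hfin
  rw [isScheduleOf_iff] at hS
  exact ⟨S, hS.1, isLinExt_of_respectsOrder hS.1 hSr, hS.2, hSb⟩

lemma setBudget_union_le {L : List ι} (hL : L.Nodup) (hLr : IsLinExt r L) {X Y : Finset ι}
    (hX : X ⊆ L.toFinset) (hY : Y ⊆ L.toFinset) (hXY : Disjoint X Y)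
    (hcross : ∀ x ∈ X, ∀ y ∈ Y, r y x → x = y) :
    setBudget r c (X ∪ Y) ≤ max (setBudget r c X) (setCost c X + setBudget r c Y) := by
  obtain ⟨SX, hSX, hSXr, rfl, hSXb⟩ := exists_optimal_schedule (c := c) hL hLr hX
  obtain ⟨SY, hSY, hSYr, rfl, hSYb⟩ := exists_optimal_schedule (c := c) hL hLr hY
  have hnd : (SX ++ SY).Nodup :=
    nodup_append.2 ⟨hSX, hSY, fun a ha b hb hab => Finset.disjoint_left.1 hXY
      (mem_toFinset.2 ha) (mem_toFinset.2 (hab ▸ hb))⟩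
  have hlin : IsLinExt r (SX ++ SY) :=
    pairwise_append.2 ⟨hSXr, hSYr, fun a ha b hb => hcross a (by simpa) b (by simpa)⟩
  calc setBudget r c (SX.toFinset ∪ SY.toFinset) ≤ listBudget c (SX ++ SY) := by
        simpa using setBudget_le_listBudget (c := c) hnd hlin
    _ = _ := by rw [listBudget_append, hSXb, hSYb, listCost_eq_setCost hSX]

lemma add_setBudget_sdiff_le {T : List ι} (hT : T.Nodup) (hTr : IsLinExt r T) {A : Finset ι}
    {m : ℝ} (hm : ∀ P, P <+: T → m ≤ setCost c (P.toFinset ∩ A)) :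
    m + setBudget r c (T.toFinset \ A) ≤ listBudget c T := by
  obtain ⟨V, hVT, hV⟩ :=
    exists_prefix_listCost_filter_eq_listBudget (c := c) (fun x => !decide (x ∈ A)) T
  have hVnd : V.Nodup := hT.sublist hVT.sublist
  have hbudget :
      setBudget r c (T.toFinset \ A) ≤ listCost c (V.filter fun x => !decide (x ∈ A)) :=
    hV ▸ toFinset_filter_not_mem T A ▸
      setBudget_le_listBudget (hT.filter _) (hTr.sublist filter_sublist)
  have hA : m ≤ listCost c (V.filter (· ∈ A)) := by
    rw [listCost_eq_setCost (hVnd.filter _), toFinset_filter_mem]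
    exact hm V hVT
  calc m + setBudget r c (T.toFinset \ A) ≤ listCost c V := by
        rw [← listCost_filter_add_listCost_filter_not (fun x => decide (x ∈ A)) V]
        linarith
    _ ≤ listBudget c T := listCost_le_listBudget_of_prefix hVT

end SetBudget

section Blocks

variable {r : ι → ι → Prop} {c : ι → ℝ}

lemma cbrLE.neg_and_setBudget_le {X Y : Finset ι} (h : cbrLE r c X Y) (hY : setCost c Y < 0) :
    setCost c X < 0 ∧ setBudget r c X ≤ setBudget r c Y := by
  rcases h with ⟨-, h⟩ | ⟨hX, -, h⟩ | ⟨hX, -, h, -⟩ | ⟨-, h, -⟩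
  · linarith
  · exact ⟨hX, h.le⟩
  · exact ⟨hX, h.le⟩
  · linarith

lemma cbrLE.setBudget_lt {X Y : Finset ι} (h : cbrLE r c X Y) (hY : setCost c Y < 0)
    (hYX : setCost c Y < setCost c X) : setBudget r c X < setBudget r c Y := by
  rcases h with ⟨-, h⟩ | ⟨-, -, h⟩ | ⟨-, -, h, hret⟩ | ⟨-, h, -⟩
  · linarith
  · exact h
  · unfold setReturn at hret
    linarith
  · linarith

/-- If a cheapest ideal `K₀` were negative and cheaper than `S`, irreducibility would give
`b(S) < b(K₀)`. The prefix `V` of `S` whose `K₀`-part costs `b(K₀)` costs at most `b(S)`, less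
than its `K₀`-part, so `V ∪ K₀` would be cheaper than `K₀`. -/
lemma min_setCost_le_of_isIdealIn {S : List ι} (hS : S.Nodup) (hSr : IsLinExt r S)
    (hirr : ∀ J, IsIdealIn r S.toFinset J → cbrLE r c S.toFinset J)
    (hopt : listBudget c S = setBudget r c S.toFinset) {K : Finset ι}
    (hK : IsIdealIn r S.toFinset K) : min (setCost c S.toFinset) 0 ≤ setCost c K := by
  classical
  obtain ⟨K₀, hK₀, hK₀min⟩ := Finset.exists_min_image
    (S.toFinset.powerset.filter (IsIdealIn r S.toFinset)) (setCost c)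
    ⟨∅, by simp [IsIdealIn]⟩
  simp only [Finset.mem_filter, Finset.mem_powerset, and_imp] at hK₀ hK₀min
  refine le_trans (not_lt.1 fun hlt => ?_) (hK₀min K hK.1 hK)
  have hK₀neg : setCost c K₀ < 0 := hlt.trans_le (min_le_right _ _)
  have hb := (hirr K₀ hK₀.2).setBudget_lt hK₀neg (hlt.trans_le (min_le_left _ _))
  obtain ⟨V, hVS, hV⟩ := exists_prefix_listCost_filter_eq_listBudget (c := c) (· ∈ K₀) S
  have hVnd : V.Nodup := hS.sublist hVS.sublist
  have hVK₀ : setBudget r c K₀ ≤ setCost c (V.toFinset ∩ K₀) := by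
    rw [← toFinset_filter_mem, ← listCost_eq_setCost (hVnd.filter _), hV]
    have := setBudget_le_listBudget (c := c) (hS.filter (· ∈ K₀)) (hSr.sublist filter_sublist)
    rwa [toFinset_filter_mem, Finset.inter_eq_right.2 hK₀.1] at this
  have hVcost : setCost c V.toFinset ≤ setBudget r c S.toFinset :=
    hopt ▸ listCost_eq_setCost hVnd ▸ listCost_le_listBudget_of_prefix hVS
  have hVideal := isIdealIn_of_prefix hSr hVS
  have hunion := hK₀min _ (Finset.union_subset hVideal.1 hK₀.1) (hVideal.union hK₀.2)
  have hsplit : setCost c (V.toFinset ∪ K₀) + setCost c (V.toFinset ∩ K₀) =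
      setCost c V.toFinset + setCost c K₀ := Finset.sum_union_inter
  linarith

/-- `IncIrrStructure` without the ambient set and the interval condition, so that it passes to
the tail of the list of blocks. -/
structure IsIncIrrBlocks (r : ι → ι → Prop) (c : ι → ℝ) (SS : List (List ι)) : Prop where
  nodup : SS.flatten.Nodup
  isLinExt : IsLinExt r SS.flatten
  irreducible : ∀ S ∈ SS, ∀ J, IsIdealIn r S.toFinset J → cbrLE r c S.toFinset J
  optimal : ∀ S ∈ SS, listBudget c S = setBudget r c S.toFinset
  increasing : SS.Pairwise fun S T => cbrLE r c S.toFinset T.toFinset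

namespace IsIncIrrBlocks

variable {A : List ι} {SS : List (List ι)}

lemma tail (h : IsIncIrrBlocks r c (A :: SS)) : IsIncIrrBlocks r c SS where
  nodup := (nodup_append.1 (flatten_cons ▸ h.nodup)).2.1
  isLinExt := (pairwise_append.1 (flatten_cons ▸ h.isLinExt)).2.1
  irreducible S hS := h.irreducible S (mem_cons_of_mem A hS)
  optimal S hS := h.optimal S (mem_cons_of_mem A hS)
  increasing := h.increasing.of_cons

lemma not_mem_tail (h : IsIncIrrBlocks r c (A :: SS)) {a : ι} (ha : a ∈ A) :
    a ∉ SS.flatten :=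
  fun hSS => (nodup_append.1 (flatten_cons ▸ h.nodup)).2.2 a ha a hSS rfl

lemma min_setCost_le_head (h : IsIncIrrBlocks r c (A :: SS)) {K : Finset ι}
    (hK : IsIdealIn r A.toFinset K) : min (setCost c A.toFinset) 0 ≤ setCost c K :=
  min_setCost_le_of_isIdealIn (nodup_append.1 (flatten_cons ▸ h.nodup)).1
    (pairwise_append.1 (flatten_cons ▸ h.isLinExt)).1 (h.irreducible A mem_cons_self)
    (h.optimal A mem_cons_self) hK

lemma isIdealIn_sdiff_head (h : IsIncIrrBlocks r c (A :: SS)) {I : Finset ι}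
    (hI : IsIdealIn r (A :: SS).flatten.toFinset I) :
    IsIdealIn r SS.flatten.toFinset (I \ A.toFinset) := by
  refine ⟨fun a ha => ?_, fun j hj i hi hij => ?_⟩
  · obtain ⟨haI, haA⟩ := Finset.mem_sdiff.1 ha
    simpa [haA] using hI.1 haI
  · have hiN : i ∈ (A :: SS).flatten.toFinset := by simp_all
    exact Finset.mem_sdiff.2 ⟨hI.2 j (Finset.mem_sdiff.1 hj).1 i hiN hij,
      fun hiA => h.not_mem_tail (mem_toFinset.1 hiA) (mem_toFinset.1 hi)⟩

end IsIncIrrBlocks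

def BoundsNegIdeals (r : ι → ι → Prop) (c : ι → ℝ) (A M : Finset ι) : Prop :=
  ∀ T : List ι, T.Nodup → IsLinExt r T → IsIdealIn r M T.toFinset → listCost c T < 0 →
    setCost c A < 0 ∧ setBudget r c A ≤ listBudget c T

lemma boundsNegIdeals_empty (A : Finset ι) : BoundsNegIdeals r c A ∅ := by
  intro T _ _ hT hneg
  obtain rfl : T = [] := by simpa using hT.1
  exact absurd hneg (lt_irrefl 0)

lemma BoundsNegIdeals.of_cbrLE {X Y M : Finset ι} (h : BoundsNegIdeals r c Y M)
    (hXY : cbrLE r c X Y) : BoundsNegIdeals r c X M := by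
  intro T hT hTr hTM hneg
  obtain ⟨hY, hYT⟩ := h T hT hTr hTM hneg
  obtain ⟨hX, hXY⟩ := hXY.neg_and_setBudget_le hY
  exact ⟨hX, hXY.trans hYT⟩

/-- Cut a schedule `T` of a negative ideal at the first prefix `U` whose part in `A` or whose
part outside `A` is negative; that part is a negative ideal of `A` or of the remaining blocks,
so its budget is at least `b(A)`. -/
lemma IsIncIrrBlocks.boundsNegIdeals_cons {A : List ι} {SS : List (List ι)}
    (h : IsIncIrrBlocks r c (A :: SS))
    (htail : BoundsNegIdeals r c A.toFinset SS.flatten.toFinset) :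
    BoundsNegIdeals r c A.toFinset (A :: SS).flatten.toFinset := by
  intro T hT hTr hTI hneg
  let p : ι → Bool := (· ∈ A.toFinset)
  obtain ⟨U, hUT, hUneg, hUmin⟩ := exists_minimal_prefix
    (fun U => listCost c (U.filter p) < 0 ∨ listCost c (U.filter fun x => !p x) < 0)
    (S := T) (by
      by_contra! hnn
      linarith [listCost_filter_add_listCost_filter_not (c := c) p T])
  simp only [not_or, not_lt] at hUmin
  have hU : U.Nodup := hT.sublist hUT.sublist
  have hUr : IsLinExt r U := hTr.sublist hUT.sublist
  have hUI : IsIdealIn r (A :: SS).flatten.toFinset U.toFinset :=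
    hTI.trans (isIdealIn_of_prefix hTr hUT)
  rcases hUneg with hAneg | hrestneg
  · have hK : IsIdealIn r A.toFinset (U.filter p).toFinset :=
      toFinset_filter_mem U _ ▸ hUI.inter subset_flatten_cons_left
    obtain ⟨hA, hAK⟩ := (h.irreducible A mem_cons_self _ hK).neg_and_setBudget_le
      (listCost_eq_setCost (hU.filter p) ▸ hAneg)
    refine ⟨hA, le_listBudget_of_neg_filter_prefix hUT p hAneg ?_
      fun V hVU hne => (hUmin V hVU hne).2⟩
    exact hAK.trans (setBudget_le_listBudget (hU.filter p) (hUr.sublist filter_sublist))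
  · have hK : IsIdealIn r SS.flatten.toFinset (U.filter fun x => !p x).toFinset :=
      toFinset_filter_not_mem U _ ▸ h.isIdealIn_sdiff_head hUI
    obtain ⟨hA, hAK⟩ := htail _ (hU.filter _) (hUr.sublist filter_sublist) hK hrestneg
    refine ⟨hA, le_listBudget_of_neg_filter_prefix hUT (fun x => !p x) hrestneg hAK ?_⟩
    simpa using fun V hVU hne => (hUmin V hVU hne).1

lemma IsIncIrrBlocks.boundsNegIdeals_head {A : List ι} {SS : List (List ι)}
    (h : IsIncIrrBlocks r c (A :: SS)) :
    BoundsNegIdeals r c A.toFinset (A :: SS).flatten.toFinset := by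
  induction SS generalizing A with
  | nil => exact h.boundsNegIdeals_cons (by simpa using boundsNegIdeals_empty _)
  | cons A₂ SS ih =>
    exact h.boundsNegIdeals_cons
      ((ih h.tail).of_cbrLE ((pairwise_cons.1 h.increasing).1 A₂ mem_cons_self))

/-- A negative `I` forces `c(A) < 0` and `b(A) ≤ b(I)`; as no ideal of `A` is cheaper than `A`,
also `c(A) + b(I \ A) ≤ b(I)`. -/
lemma IsIncIrrBlocks.head_union_dominates {A : List ι} {SS : List (List ι)}
    (h : IsIncIrrBlocks r c (A :: SS)) {I : Finset ι}
    (hI : IsIdealIn r (A :: SS).flatten.toFinset I) (hIneg : setCost c I < 0) {V : Finset ι}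
    (hV : V ⊆ SS.flatten.toFinset) (hVb : setBudget r c V ≤ setBudget r c (I \ A.toFinset))
    (hVc : setCost c V ≤ setCost c (I \ A.toFinset)) :
    setBudget r c (A.toFinset ∪ V) ≤ setBudget r c I ∧
      setCost c (A.toFinset ∪ V) ≤ setCost c I := by
  obtain ⟨T, hT, hTr, rfl, hTopt⟩ := exists_optimal_schedule (c := c) h.nodup h.isLinExt hI.1
  obtain ⟨hAneg, hAT⟩ := h.boundsNegIdeals_head T hT hTr hI (listCost_eq_setCost hT ▸ hIneg)
  have hAideal {K : Finset ι} (hK : IsIdealIn r A.toFinset K) :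
      setCost c A.toFinset ≤ setCost c K := by
    simpa [min_eq_left hAneg.le] using h.min_setCost_le_head hK
  have hsdiff : setCost c A.toFinset + setBudget r c (T.toFinset \ A.toFinset) ≤
      listBudget c T :=
    add_setBudget_sdiff_le hT hTr fun P hP =>
      hAideal ((hI.trans (isIdealIn_of_prefix hTr hP)).inter subset_flatten_cons_left)
  have hdisj : Disjoint A.toFinset V := Finset.disjoint_left.2 fun a ha haV =>
    h.not_mem_tail (mem_toFinset.1 ha) (mem_toFinset.1 (hV haV))
  constructor
  · calc setBudget r c (A.toFinset ∪ V)
        ≤ max (setBudget r c A.toFinset) (setCost c A.toFinset + setBudget r c V) :=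
          setBudget_union_le h.nodup h.isLinExt subset_flatten_cons_left
            (hV.trans subset_flatten_cons_right) hdisj
            fun a ha b hb => (pairwise_append.1 (flatten_cons ▸ h.isLinExt)).2.2 a
              (mem_toFinset.1 ha) b (mem_toFinset.1 (hV hb))
      _ ≤ setBudget r c T.toFinset := max_le (hAT.trans hTopt.le) (by linarith)
  · have hsplit : setCost c (T.toFinset ∩ A.toFinset) + setCost c (T.toFinset \ A.toFinset) =
        setCost c T.toFinset := Finset.sum_inter_add_sum_sdiff _ _ _
    have hcostU : setCost c (A.toFinset ∪ V) = setCost c A.toFinset + setCost c V :=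
      Finset.sum_union hdisj
    linarith [hAideal (hI.inter subset_flatten_cons_left)]

theorem IsIncIrrBlocks.exists_prefix_dominating {SS : List (List ι)} (h : IsIncIrrBlocks r c SS)
    {I : Finset ι} (hI : IsIdealIn r SS.flatten.toFinset I) :
    ∃ l ≤ SS.length, setBudget r c (SS.take l).flatten.toFinset ≤ setBudget r c I ∧
      setCost c (SS.take l).flatten.toFinset ≤ setCost c I := by
  induction SS generalizing I with
  | nil =>
    obtain rfl : I = ∅ := by simpa using hI.1
    exact ⟨0, le_rfl, le_rfl, le_rfl⟩
  | cons A SS ih =>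
    rcases le_or_gt 0 (setCost c I) with hI0 | hIneg
    · refine ⟨0, Nat.zero_le _, ?_, ?_⟩
      · simpa [setBudget_empty] using setBudget_nonneg (r := r) (c := c) I
      · simpa [setCost] using hI0
    obtain ⟨l, hl, hVb, hVc⟩ := ih h.tail (h.isIdealIn_sdiff_head hI)
    have hV := (isIdealIn_of_prefix h.tail.isLinExt (flatten_take_prefix SS l)).1
    refine ⟨l + 1, Nat.succ_le_succ hl, ?_⟩
    simpa [toFinset_append] using h.head_union_dominates hI hIneg hV hVb hVc

end Blocks

theorem prefix_min_cost_general (r : ι → ι → Prop)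
    (c : ι → ℝ) (N : Finset ι) (SS : List (List ι))
    (h : IncIrrStructure r c N SS) (B : ENNReal) :
    ∃ l ≤ SS.length,
      IsIdealIn r N ((SS.take l).flatten.toFinset) ∧
      ENNReal.ofReal (setBudget r c ((SS.take l).flatten.toFinset)) ≤ B ∧
      ∀ I, IsIdealIn r N I → ENNReal.ofReal (setBudget r c I) ≤ B →
        setCost c ((SS.take l).flatten.toFinset) ≤ setCost c I := by
  obtain ⟨hN, hre, hblocks, hinc⟩ := h
  obtain ⟨hnd, rfl⟩ := isScheduleOf_iff.1 hN
  have hlin := isLinExt_of_respectsOrder hnd hre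
  have hSS : IsIncIrrBlocks r c SS :=
    ⟨hnd, hlin, fun S hS => (hblocks S hS).1.2, fun S hS => (hblocks S hS).2.2,
      pairwise_iff_get.2 hinc⟩
  set feasible := (Finset.range (SS.length + 1)).filter
    fun l => ENNReal.ofReal (setBudget r c (SS.take l).flatten.toFinset) ≤ B
  have h0 : 0 ∈ feasible := by simp [feasible, setBudget_empty]
  obtain ⟨l, hl, hlmin⟩ :=
    feasible.exists_min_image (fun l => setCost c (SS.take l).flatten.toFinset) ⟨0, h0⟩
  rw [Finset.mem_filter, Finset.mem_range] at hl
  refine ⟨l, Nat.lt_succ_iff.1 hl.1, isIdealIn_of_prefix hlin (flatten_take_prefix SS l), hl.2,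
    fun I hI hIB => ?_⟩
  obtain ⟨l₁, hl₁, hb, hcost⟩ := hSS.exists_prefix_dominating hI
  have hl₁ : l₁ ∈ feasible := Finset.mem_filter.2
    ⟨Finset.mem_range.2 (Nat.lt_succ_of_le hl₁), (ENNReal.ofReal_le_ofReal hb).trans hIB⟩
  exact (hlmin l₁ hl₁).trans hcost

theorem prefix_min_cost (r : ι → ι → Prop) (hr : IsPartialOrder ι r)
    (c : ι → ℝ) (N : Finset ι) (SS : List (List ι))
    (h : IncIrrStructure r c N SS) (B : ENNReal) :
    ∃ l ≤ SS.length,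
      IsIdealIn r N ((SS.take l).flatten.toFinset) ∧
      ENNReal.ofReal (setBudget r c ((SS.take l).flatten.toFinset)) ≤ B ∧
      ∀ I, IsIdealIn r N I → ENNReal.ofReal (setBudget r c I) ≤ B →
        setCost c ((SS.take l).flatten.toFinset) ≤ setCost c I :=
  prefix_min_cost_general r c N SS h B
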